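/- arXiv:2204.10881 — 3 statements merged into one kernel-verified Lean document; each statement's English description precedes it below -/
import Mathlib

section
/- For every integer k ≥ 3 there exist constants C, C' > 0 such that for every ε > 0 and all sufficiently large n the following holds. If p ≥ C·n^{-k/2}/ε², then a random k-XOR instance I ~ F_{k-XOR}(n,p) satisfies, with probability at least 0.99, opt(I) ≤ 1/2 + C'·ε. -/
/-!
A union bound over sign vectors already gives the claim. By symmetry of `T`,
`∑_α T_α x^α = k! ∑_β x^β T_β` and `m = k! · #{β | T_β ≠ 0}`, where `β` runs over the
`M ≥ n^k / (2^k k!)` strictly increasing tuples, whose entries are independent. For a fixed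
`x ∈ {±1}^n` the summands `x^β T_β - 2ε·[T_β ≠ 0]` are independent, and for `ε ≤ 1/2` each has
moment generating function at `ε` equal to `1 - p + p e^{-2ε²} cosh ε ≤ exp(-(3/4) p ε²)`. By
Chernoff, `∑_β x^β T_β > 2ε · #{β | T_β ≠ 0}` has probability at most
`exp(-(3/4) p ε² M) ≤ exp(-12 n)` when `p ≥ 16 · 2^k k! · n^{-k/2} / ε²`, which beats the `2^n`
sign vectors. For `ε ≥ 1/2` the inequality holds almost surely, since `|T_β| ≤ [T_β ≠ 0]`.
-/

open MeasureTheory ProbabilityTheory Finset Function Real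
open scoped Nat

section StrictMonoFactorization

variable {α : Type*} [LinearOrder α] {k : ℕ}

noncomputable def permProdStrictMonoEquiv (k : ℕ) (α : Type*) [LinearOrder α] :
    Equiv.Perm (Fin k) × {β : Fin k → α // StrictMono β} ≃ {f : Fin k → α // Injective f} :=
  Equiv.ofBijective (fun σβ => ⟨σβ.2.1 ∘ σβ.1, σβ.2.2.injective.comp σβ.1.injective⟩) <| by
    refine ⟨fun ⟨σ, β, hβ⟩ ⟨σ', β', hβ'⟩ h => ?_, fun ⟨f, hf⟩ => ?_⟩
    · have hcomp : β ∘ σ = β' ∘ σ' := congrArg Subtype.val h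
      have hββ' : β = β' := by
        rw [← hβ.range_inj hβ', ← EquivLike.range_comp β σ, hcomp, EquivLike.range_comp]
      subst hββ'
      exact Prod.ext (Equiv.ext fun i => hβ.injective (congrFun hcomp i)) rfl
    · refine ⟨⟨(Tuple.sort f).symm, f ∘ Tuple.sort f,
        (Tuple.monotone_sort f).strictMono_of_injective (hf.comp (Tuple.sort f).injective)⟩, ?_⟩
      ext i
      simp

@[simp]
theorem coe_permProdStrictMonoEquiv_apply
    (σβ : Equiv.Perm (Fin k) × {β : Fin k → α // StrictMono β}) :
    (permProdStrictMonoEquiv k α σβ : Fin k → α) = σβ.2.1 ∘ σβ.1 :=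
  rfl

variable [Fintype α]

open scoped Classical in
theorem factorial_mul_card_strictMono :
    k ! * Fintype.card {β : Fin k → α // StrictMono β} = (Fintype.card α).descFactorial k := by
  have hperm : Fintype.card (Equiv.Perm (Fin k)) = k ! := by
    rw [Fintype.card_perm, Fintype.card_fin]
  rw [← hperm, ← Fintype.card_prod, Fintype.card_congr (permProdStrictMonoEquiv k α),
    Fintype.card_congr (Equiv.subtypeInjectiveEquivEmbedding (Fin k) α),
    Fintype.card_embedding_eq, Fintype.card_fin]

open scoped Classical in
theorem sum_eq_factorial_smul_sum_strictMono {M : Type*} [AddCommMonoid M]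
    (f : (Fin k → α) → M) (hsymm : ∀ a (σ : Equiv.Perm (Fin k)), f (a ∘ σ) = f a)
    (hzero : ∀ a, ¬ Injective a → f a = 0) :
    ∑ a, f a = k ! • ∑ β : {β : Fin k → α // StrictMono β}, f β := by
  rw [← sum_subset (subset_univ {a | Injective a}) fun a _ ha => hzero a (by simpa using ha),
    sum_subtype _ (fun _ => mem_filter_univ _), ← (permProdStrictMonoEquiv k α).sum_comp,
    Fintype.sum_prod_type]
  simp only [coe_permProdStrictMonoEquiv_apply, hsymm, sum_const]
  rw [Finset.card_univ, Fintype.card_perm, Fintype.card_fin]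

open scoped Classical in
theorem sum_mul_prod_le_of_sum_strictMono_le {T : (Fin k → α) → ℝ}
    (hsymm : ∀ a (σ : Equiv.Perm (Fin k)), T (a ∘ σ) = T a) (hzero : ∀ a, ¬ Injective a → T a = 0)
    (x : α → ℝ) {b : ℝ} (h : ∑ β : {β : Fin k → α // StrictMono β}, (∏ i, x (β.1 i)) * T β ≤
      b * #{β : {β : Fin k → α // StrictMono β} | T β ≠ 0}) :
    ∑ a, T a * ∏ i, x (a i) ≤ b * #{a | T a ≠ 0} := by
  have hsum := sum_eq_factorial_smul_sum_strictMono (fun a => T a * ∏ i, x (a i))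
    (fun a σ => by simp only [hsymm, comp_apply, Equiv.prod_comp σ fun i => x (a i)])
    (fun a ha => by simp only [hzero a ha, zero_mul])
  have hcard := sum_eq_factorial_smul_sum_strictMono (fun a => if T a ≠ 0 then (1 : ℝ) else 0)
    (fun a σ => by simp only [hsymm]) (fun a ha => by simp [hzero a ha])
  rw [natCast_card_filter] at h ⊢
  rw [hsum, hcard, nsmul_eq_mul, nsmul_eq_mul]
  calc (k ! : ℝ) * ∑ β : {β : Fin k → α // StrictMono β}, T β * ∏ i, x (β.1 i)
      ≤ k ! * (b * ∑ β : {β : Fin k → α // StrictMono β}, if T β ≠ 0 then 1 else 0) := by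
        gcongr; simpa only [mul_comm] using h
    _ = b * (k ! * ∑ β : {β : Fin k → α // StrictMono β}, if T β ≠ 0 then 1 else 0) := by ring

end StrictMonoFactorization

theorem pow_le_two_pow_mul_descFactorial {n k : ℕ} (h : 2 * k ≤ n + 2) :
    n ^ k ≤ 2 ^ k * n.descFactorial k :=
  calc n ^ k ≤ (2 * (n + 1 - k)) ^ k := Nat.pow_le_pow_left (by omega) k
    _ ≤ 2 ^ k * n.descFactorial k := by
      rw [mul_pow]; exact Nat.mul_le_mul_left _ (n.pow_sub_le_descFactorial k)

theorem prod_eq_one_or_eq_neg_one {ι R : Type*} [CommMonoid R] [HasDistribNeg R] {s : Finset ι}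
    {f : ι → R} (h : ∀ i ∈ s, f i = 1 ∨ f i = -1) : ∏ i ∈ s, f i = 1 ∨ ∏ i ∈ s, f i = -1 :=
  prod_induction f (fun y => y = 1 ∨ y = -1) (by rintro _ _ (rfl | rfl) (rfl | rfl) <;> simp)
    (Or.inl rfl) h

section SparseRademacher

variable {Ω : Type*} [MeasurableSpace Ω] {μ : Measure Ω} {Y : Ω → ℝ} {p : ℝ}

def IsSparseRademacher (μ : Measure Ω) (Y : Ω → ℝ) (p : ℝ) : Prop :=
  μ {ω | Y ω = 1} = ENNReal.ofReal (p / 2) ∧ μ {ω | Y ω = -1} = ENNReal.ofReal (p / 2) ∧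
    μ {ω | Y ω = 0} = ENNReal.ofReal (1 - p)

namespace IsSparseRademacher

variable [IsProbabilityMeasure μ] (h : IsSparseRademacher μ Y p) (hY : Measurable Y)
  (hp : 0 ≤ p)
include h hY hp

theorem le_one : p ≤ 1 := by
  have hdisj : Disjoint {ω | Y ω = 1} {ω | Y ω = -1} :=
    Set.disjoint_left.2 fun ω (h₁ : Y ω = 1) (h₂ : Y ω = -1) => by norm_num [h₁] at h₂
  have := prob_le_one (μ := μ) (s := {ω | Y ω = 1} ∪ {ω | Y ω = -1})
  rw [measure_union hdisj (hY (measurableSet_singleton _)), h.1, h.2.1,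
    ← ENNReal.ofReal_add (by positivity) (by positivity), add_halves] at this
  exact ENNReal.ofReal_le_one.1 this

theorem ae_eq_one_or_eq_neg_one_or_eq_zero : ∀ᵐ ω ∂μ, Y ω = 1 ∨ Y ω = -1 ∨ Y ω = 0 := by
  have hset : {ω | Y ω = 1 ∨ Y ω = -1 ∨ Y ω = 0} = Y ⁻¹' ↑({1, -1, 0} : Finset ℝ) := by
    ext; simp
  have hmeas : MeasurableSet (Y ⁻¹' ↑({1, -1, 0} : Finset ℝ)) := hY (by simp)
  rw [ae_iff_measure_eq (hset ▸ hmeas.nullMeasurableSet), hset, measure_univ,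
    ← sum_measure_preimage_singleton _ fun v _ => hY (measurableSet_singleton v),
    sum_insert (by norm_num), sum_insert (by norm_num), sum_singleton]
  simp only [Set.preimage, Set.mem_singleton_iff]
  rw [h.1, h.2.1, h.2.2, ← ENNReal.ofReal_add (by positivity) (sub_nonneg.2 (h.le_one hY hp)),
    ← ENNReal.ofReal_add (by positivity) (by linarith [h.le_one hY hp]),
    show p / 2 + (p / 2 + (1 - p)) = 1 by ring, ENNReal.ofReal_one]

theorem comp_ae_eq_indicator (f : ℝ → ℝ) :
    (fun ω => f (Y ω)) =ᵐ[μ] {ω | Y ω = 1}.indicator (fun _ => f 1) +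
      {ω | Y ω = -1}.indicator (fun _ => f (-1)) + {ω | Y ω = 0}.indicator (fun _ => f 0) := by
  filter_upwards [h.ae_eq_one_or_eq_neg_one_or_eq_zero hY hp] with ω hω
  rcases hω with hω | hω | hω <;> norm_num [hω]

theorem integrable_comp (f : ℝ → ℝ) : Integrable (fun ω => f (Y ω)) μ := by
  refine Integrable.congr ?_ (h.comp_ae_eq_indicator hY hp f).symm
  exact (((integrable_const _).indicator (hY (measurableSet_singleton _))).add
    ((integrable_const _).indicator (hY (measurableSet_singleton _)))).add
    ((integrable_const _).indicator (hY (measurableSet_singleton _)))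

theorem integral_comp (f : ℝ → ℝ) :
    ∫ ω, f (Y ω) ∂μ = p / 2 * f 1 + p / 2 * f (-1) + (1 - p) * f 0 := by
  have hm (v : ℝ) : MeasurableSet {ω | Y ω = v} := hY (measurableSet_singleton v)
  have hint (v : ℝ) : Integrable ({ω | Y ω = v}.indicator fun _ => f v) μ :=
    (integrable_const _).indicator (hm v)
  rw [integral_congr_ae (h.comp_ae_eq_indicator hY hp f), integral_add' ((hint 1).add (hint (-1)))
    (hint 0), integral_add' (hint 1) (hint (-1))]
  simp only [integral_indicator_const _ (hm _), measureReal_def, h.1,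
    h.2.1, h.2.2, ENNReal.toReal_ofReal (by positivity : 0 ≤ p / 2),
    ENNReal.toReal_ofReal (sub_nonneg.2 (h.le_one hY hp)), smul_eq_mul]

theorem mgf_mul_sub_indicator {c : ℝ} (hc : c = 1 ∨ c = -1) (a t : ℝ) :
    mgf (fun ω => c * Y ω - a * (if Y ω ≠ 0 then 1 else 0)) μ t =
      1 - p + p * exp (-(t * a)) * cosh t := by
  rw [mgf, h.integral_comp hY hp fun y => exp (t * (c * y - a * (if y ≠ 0 then 1 else 0))),
    cosh_eq]
  rcases hc with rfl | rfl <;> norm_num [mul_sub] <;>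
    rw [show t - t * a = -(t * a) + t by ring, show -t - t * a = -(t * a) + -t by ring, exp_add,
      exp_add] <;> ring

end IsSparseRademacher

end SparseRademacher

theorem ProbabilityTheory.iIndepFun.measureReal_sum_ge_le_of_mgf_le {Ω ι : Type*}
    [MeasurableSpace Ω] {μ : Measure Ω} [IsProbabilityMeasure μ] [Fintype ι] {X : ι → Ω → ℝ}
    (hindep : iIndepFun X μ) (hmeas : ∀ i, Measurable (X i)) {t b : ℝ} (ht : 0 ≤ t)
    (hint : ∀ i, Integrable (fun ω => exp (t * X i ω)) μ) (hmgf : ∀ i, mgf (X i) μ t ≤ exp b)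
    (a : ℝ) : μ.real {ω | a ≤ ∑ i, X i ω} ≤ exp (-t * a + Fintype.card ι * b) := by
  have hchernoff := measure_ge_le_exp_mul_mgf a ht
    (hindep.integrable_exp_mul_sum hmeas (s := univ) fun i _ => hint i)
  simp only [Finset.sum_apply] at hchernoff
  calc μ.real {ω | a ≤ ∑ i, X i ω}
      ≤ exp (-t * a) * ∏ i, mgf (X i) μ t := by rwa [← hindep.mgf_sum hmeas]
    _ ≤ exp (-t * a) * ∏ _i : ι, exp b := by
      gcongr with i
      · exact fun i _ => mgf_nonneg
      · exact hmgf i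
    _ = exp (-t * a + Fintype.card ι * b) := by
      rw [prod_const, Finset.card_univ, ← exp_nat_mul, ← exp_add]

theorem exp_neg_le_one_sub_half {x : ℝ} (hx₀ : 0 ≤ x) (hx₁ : x ≤ 1) : exp (-x) ≤ 1 - x / 2 := by
  have hinv : exp (-x) * exp x = 1 := by rw [← exp_add, neg_add_cancel, exp_zero]
  by_contra! hlt
  nlinarith [mul_le_mul_of_nonneg_left (add_one_le_exp x) (exp_pos (-x)).le,
    mul_lt_mul_of_pos_right hlt (by linarith : 0 < x + 1)]

theorem one_sub_add_mul_exp_mul_cosh_le {p ε : ℝ} (hp : 0 ≤ p) (hε₀ : 0 ≤ ε) (hε₁ : ε ≤ 1 / 2) :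
    1 - p + p * exp (-(ε * (2 * ε))) * cosh ε ≤ exp (-(3 / 4 * p * ε ^ 2)) := by
  have hx : exp (-(3 / 2 * ε ^ 2)) ≤ 1 - 3 / 4 * ε ^ 2 := by
    have := exp_neg_le_one_sub_half (x := 3 / 2 * ε ^ 2) (by positivity) (by nlinarith)
    linarith
  have hcosh : exp (-(ε * (2 * ε))) * cosh ε ≤ exp (-(3 / 2 * ε ^ 2)) := by
    calc exp (-(ε * (2 * ε))) * cosh ε ≤ exp (-(ε * (2 * ε))) * exp (ε ^ 2 / 2) := by
          gcongr; exact cosh_le_exp_half_sq ε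
      _ = exp (-(3 / 2 * ε ^ 2)) := by rw [← exp_add]; ring_nf
  calc 1 - p + p * exp (-(ε * (2 * ε))) * cosh ε ≤ 1 - p + p * (1 - 3 / 4 * ε ^ 2) := by
        rw [mul_assoc]; gcongr; exact hcosh.trans hx
    _ = -(3 / 4 * p * ε ^ 2) + 1 := by ring
    _ ≤ exp (-(3 / 4 * p * ε ^ 2)) := add_one_le_exp _

section SignedSums

variable {Ω ι : Type*} [MeasurableSpace Ω] {μ : Measure Ω} [IsProbabilityMeasure μ] [Fintype ι]
  {Y : ι → Ω → ℝ} {p ε : ℝ}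

open scoped Classical in
theorem measureReal_mul_card_ne_zero_le_sum_mul_le (hindep : iIndepFun Y μ)
    (hmeas : ∀ i, Measurable (Y i)) (hY : ∀ i, IsSparseRademacher μ (Y i) p) (hp : 0 ≤ p)
    (hε₀ : 0 ≤ ε) (hε₁ : ε ≤ 1 / 2) {c : ι → ℝ} (hc : ∀ i, c i = 1 ∨ c i = -1) :
    μ.real {ω | 2 * ε * #{i | Y i ω ≠ 0} ≤ ∑ i, c i * Y i ω} ≤
      exp (-(3 / 4 * p * ε ^ 2 * Fintype.card ι)) := by
  set g : ι → ℝ → ℝ := fun i y => c i * y - 2 * ε * (if y ≠ 0 then 1 else 0)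
  have hg : ∀ i, Measurable (g i) := fun i =>
    (measurable_const.mul measurable_id).sub
      (measurable_const.mul (Measurable.ite (measurableSet_singleton 0).compl measurable_const
        measurable_const))
  have hmgf (i : ι) : mgf (g i ∘ Y i) μ ε ≤ exp (-(3 / 4 * p * ε ^ 2)) :=
    ((hY i).mgf_mul_sub_indicator (hmeas i) hp (hc i) _ _).trans_le
      (one_sub_add_mul_exp_mul_cosh_le hp hε₀ hε₁)
  have hZ := (hindep.comp g hg).measureReal_sum_ge_le_of_mgf_le (fun i => (hg i).comp (hmeas i))
    hε₀ (fun i => (hY i).integrable_comp (hmeas i) hp fun y => exp (ε * g i y)) hmgf 0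
  refine (measureReal_mono fun ω hω => ?_).trans (hZ.trans_eq (by ring_nf))
  simp only [Set.mem_ofPred_eq, comp_apply, g, sum_sub_distrib, ← mul_sum] at hω ⊢
  rw [← natCast_card_filter]
  linarith

open scoped Classical in
theorem measureReal_exists_mul_card_ne_zero_lt_sum_mul_le {κ : Type*} (hindep : iIndepFun Y μ)
    (hmeas : ∀ i, Measurable (Y i)) (hY : ∀ i, IsSparseRademacher μ (Y i) p) (hp : 0 ≤ p)
    (hε : 0 ≤ ε) {c : κ → ι → ℝ} (s : Finset κ) (hc : ∀ j ∈ s, ∀ i, c j i = 1 ∨ c j i = -1) :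
    μ.real {ω | ∃ j ∈ s, 2 * ε * #{i | Y i ω ≠ 0} < ∑ i, c j i * Y i ω} ≤
      #s * exp (-(3 / 4 * p * ε ^ 2 * Fintype.card ι)) := by
  rcases lt_or_ge ε (1 / 2) with hε₁ | hε₁
  · have hunion : {ω | ∃ j ∈ s, 2 * ε * #{i | Y i ω ≠ 0} < ∑ i, c j i * Y i ω} =
        ⋃ j ∈ s, {ω | 2 * ε * #{i | Y i ω ≠ 0} < ∑ i, c j i * Y i ω} := by
      ext; simp
    rw [hunion, ← nsmul_eq_mul]
    refine (measureReal_biUnion_finset_le s _).trans (sum_le_card_nsmul _ _ _ fun j hj => ?_)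
    refine le_trans (measureReal_mono ?_)
      (measureReal_mul_card_ne_zero_le_sum_mul_le hindep hmeas hY hp hε hε₁.le (hc j hj))
    exact fun ω hω => Set.mem_ofPred.2 (Set.mem_ofPred.1 hω).le
  · have hae : ∀ᵐ ω ∂μ, ∀ i, Y i ω = 1 ∨ Y i ω = -1 ∨ Y i ω = 0 :=
      ae_all_iff.2 fun i => (hY i).ae_eq_one_or_eq_neg_one_or_eq_zero (hmeas i) hp
    refine le_of_eq_of_le ?_ (by positivity)
    rw [measureReal_eq_zero_iff]
    refine measure_mono_null ?_ (ae_iff.1 hae)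
    rintro ω ⟨j, hj, hlt⟩ hω
    refine hlt.not_ge ?_
    rw [natCast_card_filter, mul_sum]
    refine sum_le_sum fun i _ => ?_
    rcases hc j hj i with hcji | hcji <;> rcases hω i with hYi | hYi | hYi <;>
      simp [hcji, hYi] <;> linarith

open scoped Classical in
theorem one_sub_card_mul_exp_le_measureReal_forall_sum_mul_le {κ : Type*}
    (hindep : iIndepFun Y μ) (hmeas : ∀ i, Measurable (Y i))
    (hY : ∀ i, IsSparseRademacher μ (Y i) p) (hp : 0 ≤ p) (hε : 0 ≤ ε) {c : κ → ι → ℝ}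
    (s : Finset κ) (hc : ∀ j ∈ s, ∀ i, c j i = 1 ∨ c j i = -1) :
    1 - #s * exp (-(3 / 4 * p * ε ^ 2 * Fintype.card ι)) ≤
      μ.real {ω | ∀ j ∈ s, ∑ i, c j i * Y i ω ≤ 2 * ε * #{i | Y i ω ≠ 0}} := by
  set bad := {ω | ∃ j ∈ s, 2 * ε * #{i | Y i ω ≠ 0} < ∑ i, c j i * Y i ω}
  set good := {ω | ∀ j ∈ s, ∑ i, c j i * Y i ω ≤ 2 * ε * #{i | Y i ω ≠ 0}}
  have hcover : Set.univ ⊆ bad ∪ good := fun ω _ => by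
    by_cases h : ω ∈ bad
    · exact Or.inl h
    · right
      simpa [bad, good] using h
  have := (measureReal_mono (μ := μ) hcover).trans (measureReal_union_le bad good)
  rw [probReal_univ] at this
  linarith [measureReal_exists_mul_card_ne_zero_lt_sum_mul_le hindep hmeas hY hp hε s hc]

end SignedSums

theorem le_pow_mul_rpow_neg_half {x : ℝ} {k : ℕ} (hx : 1 ≤ x) (hk : 2 ≤ k) :
    x ≤ x ^ k * x ^ (-(k : ℝ) / 2) := by
  rw [← rpow_natCast, ← rpow_add (by linarith)]
  calc x = x ^ (1 : ℝ) := (rpow_one x).symm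
    _ ≤ x ^ ((k : ℝ) + -(k : ℝ) / 2) := by
      have : (2 : ℝ) ≤ k := by exact_mod_cast hk
      exact rpow_le_rpow_of_exponent_le hx (by linarith)

open scoped Classical in
theorem mul_le_mul_sq_mul_card_strictMono {k n : ℕ} (hk : 2 ≤ k) (hn : 2 * k ≤ n) {c p ε : ℝ}
    (hc : 0 ≤ c) (hε : 0 < ε) (hp : c * 2 ^ k * k ! * (n : ℝ) ^ (-(k : ℝ) / 2) / ε ^ 2 ≤ p) :
    c * n ≤ p * ε ^ 2 * Fintype.card {β : Fin k → Fin n // StrictMono β} := by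
  set M := Fintype.card {β : Fin k → Fin n // StrictMono β}
  have hM : (n : ℝ) ^ k ≤ 2 ^ k * k ! * M := by
    have hcard := factorial_mul_card_strictMono (α := Fin n) (k := k)
    rw [Fintype.card_fin] at hcard
    have := pow_le_two_pow_mul_descFactorial (n := n) (k := k) (by omega)
    rw [← hcard, ← mul_assoc] at this
    exact_mod_cast this
  calc c * n ≤ c * ((n : ℝ) ^ k * (n : ℝ) ^ (-(k : ℝ) / 2)) := by
        gcongr; exact le_pow_mul_rpow_neg_half (by exact_mod_cast (by omega : 1 ≤ n)) hk
    _ ≤ c * (2 ^ k * k ! * M * (n : ℝ) ^ (-(k : ℝ) / 2)) := by gcongr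
    _ = c * 2 ^ k * k ! * (n : ℝ) ^ (-(k : ℝ) / 2) / ε ^ 2 * ε ^ 2 * M := by field_simp
    _ ≤ p * ε ^ 2 * M := by gcongr

theorem two_pow_mul_exp_neg_le {n : ℕ} (hn : 1 ≤ n) : (2 : ℝ) ^ n * exp (-(12 * n)) ≤ 1 / 100 := by
  have h2e : (2 : ℝ) ≤ exp 1 := by linarith [add_one_le_exp 1]
  have hpow : 100 * (2 : ℝ) ^ n ≤ exp (12 * n) :=
    calc 100 * (2 : ℝ) ^ n ≤ 2 ^ 7 * 2 ^ n := by gcongr; norm_num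
      _ = 2 ^ (7 + n) := by rw [pow_add]
      _ ≤ 2 ^ (12 * n) := pow_le_pow_right₀ (by norm_num) (by omega)
      _ ≤ exp 1 ^ (12 * n) := by gcongr
      _ = exp (12 * n) := by rw [← exp_nat_mul]; push_cast; ring_nf
  rw [exp_neg, ← div_eq_mul_inv, div_le_div_iff₀ (exp_pos _) (by norm_num)]
  linarith

open scoped Classical in
/-- **Strong refutation of random k-XOR** (Theorem 1.1 / 5.1).
For every `k ≥ 3` there are constants `C, C' > 0` such that for every `ε > 0` and all
sufficiently large `n`: if `p ≥ C·n^{-k/2}/ε²`, then a random `k`-XOR instance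
(given by a random symmetric tensor `T` with entries `0, ±1` as described, independent up to
symmetry) satisfies `opt(I) ≤ 1/2 + C'·ε` with probability at least `0.99`.
Here `opt(I) ≤ 1/2 + C'·ε` is expressed as: for every `x ∈ {±1}^n`,
`∑_α T_α x^α ≤ C'·ε·(2m)` where `m = #{α : T_α ≠ 0}`. -/
theorem strong_refutation_kxor (k : ℕ) (hk : 3 ≤ k) :
    ∃ C C' : ℝ, 0 < C ∧ 0 < C' ∧
      ∀ ε : ℝ, 0 < ε →
      ∃ N : ℕ, ∀ n : ℕ, N ≤ n →
      ∀ p : ℝ, C * (n : ℝ) ^ (-(k : ℝ) / 2) / ε ^ 2 ≤ p →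
      ∀ (Ω : Type) (_ : MeasurableSpace Ω) (μ : Measure Ω), IsProbabilityMeasure μ →
      ∀ T : Ω → (Fin k → Fin n) → ℝ,
        Measurable T →
        -- `T` is a symmetric tensor
        (∀ ω (α : Fin k → Fin n) (σ : Equiv.Perm (Fin k)), T ω (α ∘ σ) = T ω α) →
        -- entries with non-distinct indices vanish
        (∀ ω (α : Fin k → Fin n), ¬ Function.Injective α → T ω α = 0) →
        -- marginal distribution of each entry with distinct indices
        (∀ α : Fin k → Fin n, Function.Injective α →
          μ {ω | T ω α = 1} = ENNReal.ofReal (p / 2) ∧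
          μ {ω | T ω α = -1} = ENNReal.ofReal (p / 2) ∧
          μ {ω | T ω α = 0} = ENNReal.ofReal (1 - p)) →
        -- entries are independent up to symmetry
        iIndepFun
          (fun (β : {α : Fin k → Fin n // StrictMono α}) (ω : Ω) => T ω β.1) μ →
        ENNReal.ofReal 0.99 ≤
          μ {ω | ∀ x : Fin n → ℝ, (∀ i, x i = 1 ∨ x i = -1) →
              (∑ α : Fin k → Fin n, T ω α * ∏ i, x (α i)) ≤
                C' * ε *
                  (2 * ((univ.filter fun α : Fin k → Fin n => T ω α ≠ 0).card : ℝ)) } := by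
  refine ⟨16 * 2 ^ k * k !, 1, by positivity, one_pos, fun ε hε => ⟨2 * k, ?_⟩⟩
  intro n hn p hp Ω _ μ _ T hT hsymm hzero hlaw hindep
  set M := Fintype.card {β : Fin k → Fin n // StrictMono β}
  have hp₀ : 0 ≤ p := le_trans (by positivity) hp
  have hpM : 16 * n ≤ p * ε ^ 2 * M :=
    mul_le_mul_sq_mul_card_strictMono (by omega) hn (by norm_num) hε hp
  set signs := Fintype.piFinset fun _ : Fin n => ({1, -1} : Finset ℝ)
  have hunion : (#signs : ℝ) * exp (-(3 / 4 * p * ε ^ 2 * M)) ≤ 1 / 100 := by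
    rw [Fintype.card_piFinset_const, card_pair (by norm_num)]
    push_cast
    calc (2 : ℝ) ^ n * exp (-(3 / 4 * p * ε ^ 2 * M)) ≤ 2 ^ n * exp (-(12 * n)) :=
          mul_le_mul_of_nonneg_left (exp_le_exp.2 (by linarith)) (by positivity)
      _ ≤ 1 / 100 := two_pow_mul_exp_neg_le (by omega)
  have hgood := one_sub_card_mul_exp_le_measureReal_forall_sum_mul_le hindep
    (fun β => hT.eval) (fun β => hlaw β.1 β.2.injective) hp₀ hε.le signs fun x hx β =>
      prod_eq_one_or_eq_neg_one (s := univ) fun i _ => by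
        simpa using Fintype.mem_piFinset.1 hx (β.1 i)
  refine le_trans ((ENNReal.ofReal_le_iff_le_toReal (measure_ne_top _ _)).2
    (le_trans (by norm_num; linarith) hgood)) (measure_mono fun ω hω x hx => ?_)
  have := sum_mul_prod_le_of_sum_strictMono_le (hsymm ω) (hzero ω) x
    (hω x (Fintype.mem_piFinset.2 fun i => by simpa using hx i))
  linarith
end

section
/- Let A ∈ ℝ^{n×n} be a symmetric matrix with zero diagonal, with associated non-backtracking matrix B = B(A). Then for every integer z ≥ 2 and every pair of oriented edges e, f of the weighted graph G defined by A, (B^{z-1})_{ef} = Σ_{W ∈ NBW_{ef}^z} σ̃_{e₁^{-1}}·σ̃_{e_z}·√|A_{e₁}·A_{e_z}|·Π_{s=2}^{z-1} A_{e_s}, where NBW_{ef}^z is the set of non-backtracking walks in the complete graph K_n consisting of z directed edges e₁, …, e_z with e₁ = e and e_z = f. -/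
open Matrix

noncomputable section

open scoped Classical

/-- The index type of oriented edges of the weighted graph defined by `A`:
pairs `(u,v)` with `A u v ≠ 0`. -/
def EdgeIdx {n : ℕ} (A : Matrix (Fin n) (Fin n) ℝ) : Type :=
  {e : Fin n × Fin n // A e.1 e.2 ≠ 0}

instance {n : ℕ} (A : Matrix (Fin n) (Fin n) ℝ) : Fintype (EdgeIdx A) :=
  Subtype.fintype _

instance {n : ℕ} (A : Matrix (Fin n) (Fin n) ℝ) : DecidableEq (EdgeIdx A) :=
  Subtype.instDecidableEq

/-- The non-backtracking matrix `B(A)` associated to a symmetric real matrix `A`. -/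
def Bmat {n : ℕ} (A : Matrix (Fin n) (Fin n) ℝ) : Matrix (EdgeIdx A) (EdgeIdx A) ℝ :=
  fun e f =>
    if e.1.2 = f.1.1 ∧ f.1 ≠ (e.1.2, e.1.1) then
      Real.sqrt |A e.1.1 e.1.2 * A f.1.1 f.1.2| *
        (if f.1.1 < e.1.1 ∧ f.1.1 < f.1.2 then
            Real.sign (A e.1.1 e.1.2) * Real.sign (A f.1.1 f.1.2)
          else if f.1.2 < f.1.1 ∧ f.1.1 < e.1.1 then Real.sign (A e.1.1 e.1.2)
          else if e.1.1 < f.1.1 ∧ f.1.1 < f.1.2 then Real.sign (A f.1.1 f.1.2)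
          else 1)
    else 0

/-- The matrix `L(A) = [[0, Q(A)], [Q(A), 0]]`: it sends an oriented edge `e` to its
reversal `e⁻¹` with weight `|A_e|`. -/
def Lmat {n : ℕ} (A : Matrix (Fin n) (Fin n) ℝ) : Matrix (EdgeIdx A) (EdgeIdx A) ℝ :=
  fun e f => if f.1 = (e.1.2, e.1.1) then |A e.1.1 e.1.2| else 0

/-- The matrix `J(A) = [[0, Id], [Id, 0]]`: it sends an oriented edge `e` to its
reversal `e⁻¹` with weight `1`. -/
def Jmat {n : ℕ} (A : Matrix (Fin n) (Fin n) ℝ) : Matrix (EdgeIdx A) (EdgeIdx A) ℝ :=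
  fun e f => if f.1 = (e.1.2, e.1.1) then 1 else 0

/-- The diagonal matrix `D(A)` with `D_{uu} = ∑_w |A_{uw}|`. -/
def Dmat {n : ℕ} (A : Matrix (Fin n) (Fin n) ℝ) : Matrix (Fin n) (Fin n) ℝ :=
  Matrix.diagonal fun u => ∑ w, |A u w|

/-!
Put `d(e) = σ̃_{e⁻¹} √|A_e|` (`edgeScale`, with `σ̃ = tildeSign`) and let `N` (`nbMatrix`) be
the matrix on oriented edges with `N_{gh} = A_h` whenever `h` continues `g` without
backtracking. The sign table defining `B` is exactly the one making `D N = B D` for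
`D = diag(d)`, because `σ̃_{vu} σ̃_{uv} |A_{uv}| = A_{uv}`; hence `B^k = D N^k D⁻¹`. Expanding
`N^k` as a sum over paths in the line graph, i.e. over non-backtracking vertex walks, produces
the products of `A` along `e₂, …, e_z`, and dividing the last factor `A_f` by `d(f)` leaves
`σ̃_f √|A_f|`. Walks through a zero entry of `A` contribute nothing, so the sum may run over all
walks in `K_n`.
-/

def walkEdges {ι : Type*} {m : ℕ} (v : Fin (m + 1) → ι) (s : Fin m) : ι × ι :=
  (v s.castSucc, v s.succ)

theorem walkEdges_injective {ι : Type*} (k : ℕ) :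
    Function.Injective (walkEdges : (Fin (k + 2) → ι) → Fin (k + 1) → ι × ι) := by
  intro v w h
  funext i
  induction i using Fin.lastCases with
  | last => exact congrArg Prod.snd (congrFun h (Fin.last k))
  | cast s => exact congrArg Prod.fst (congrFun h s)

theorem mem_range_walkEdges {ι : Type*} {k : ℕ} (p : Fin (k + 1) → ι × ι)
    (hp : ∀ t : Fin k, (p t.castSucc).2 = (p t.succ).1) : p ∈ Set.range walkEdges := by
  refine ⟨Fin.snoc (fun s => (p s).1) (p (Fin.last k)).2, funext fun s => ?_⟩
  induction s using Fin.lastCases with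
  | last => simp [walkEdges]
  | cast t => simp only [walkEdges, Fin.succ_castSucc, Fin.snoc_castSucc, ← hp t]

namespace Matrix

variable {ι κ R : Type*} [Fintype ι] [DecidableEq ι]

theorem pow_apply_eq_sum_paths [CommSemiring R] (M : Matrix ι ι R) (k : ℕ) (i j : ι) :
    (M ^ k) i j = ∑ p : Fin (k + 1) → ι,
      if p 0 = i ∧ p (Fin.last k) = j then ∏ t : Fin k, M (p t.castSucc) (p t.succ) else 0 := by
  induction k generalizing i with
  | zero =>
    rw [← (Equiv.funUnique (Fin 1) ι).symm.sum_comp]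
    simp [one_apply, ite_and]
  | succ k ih =>
    rw [pow_succ', mul_apply, ← (Fin.consEquiv fun _ => ι).sum_comp, Fintype.sum_prod_type]
    simp only [ih, Finset.mul_sum, Fin.consEquiv_apply, Fin.cons_zero, Fin.cons_last,
      Fin.prod_univ_succ, Fin.castSucc_zero, Fin.cons_succ, ite_and]
    rw [Finset.sum_comm]
    simp [mul_ite, Finset.sum_ite_irrel]

theorem submatrix_pow_of_apply_eq_zero [Fintype κ] [DecidableEq κ] [Semiring R]
    (M : Matrix ι ι R) {e : κ → ι} (he : Function.Injective e)
    (hM : ∀ i j, j ∉ Set.range e → M i j = 0) (k : ℕ) :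
    M.submatrix e e ^ k = (M ^ k).submatrix e e := by
  induction k with
  | zero => simp [submatrix_one e he]
  | succ k ih =>
    ext a b
    rw [pow_succ', pow_succ', submatrix_apply, mul_apply, mul_apply, ih]
    exact Fintype.sum_of_injective e he _ _ (fun j hj => by rw [hM _ j hj, zero_mul]) fun _ => rfl

theorem pow_apply_eq_sum_walks [CommSemiring R] (M : Matrix (ι × ι) (ι × ι) R)
    (hM : ∀ g h, g.2 ≠ h.1 → M g h = 0) (k : ℕ) (g h : ι × ι) :
    (M ^ k) g h = ∑ v : Fin (k + 2) → ι,
      if walkEdges v 0 = g ∧ walkEdges v (Fin.last k) = h then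
        ∏ t : Fin k, M (walkEdges v t.castSucc) (walkEdges v t.succ) else 0 := by
  rw [pow_apply_eq_sum_paths]
  refine (Fintype.sum_of_injective walkEdges (walkEdges_injective k) _ _ (fun p hp => ?_)
    fun _ => rfl).symm
  obtain ⟨t, ht⟩ : ∃ t : Fin k, (p t.castSucc).2 ≠ (p t.succ).1 := by
    by_contra! h
    exact hp (mem_range_walkEdges p h)
  rw [Finset.prod_eq_zero (Finset.mem_univ t) (hM _ _ ht), ite_self]

end Matrix

namespace Fin

theorem forall_val_eq_add_one_imp_iff {m : ℕ} {P : Fin (m + 1) → Fin (m + 1) → Prop} :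
    (∀ i j : Fin (m + 1), (j : ℕ) = i + 1 → P i j) ↔
      ∀ t : Fin m, P t.castSucc t.succ := by
  refine ⟨fun h t => h _ _ (by simp), fun h i j hij => ?_⟩
  obtain ⟨t, rfl, rfl⟩ : ∃ t : Fin m, t.castSucc = i ∧ t.succ = j :=
    ⟨⟨i, by omega⟩, Fin.ext rfl, Fin.ext (by simp [hij])⟩
  exact h t

theorem forall_val_eq_add_two_imp_iff {m : ℕ} {P : Fin (m + 2) → Fin (m + 2) → Prop} :
    (∀ i j : Fin (m + 2), (j : ℕ) = i + 2 → P i j) ↔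
      ∀ t : Fin m, P t.castSucc.castSucc t.succ.succ := by
  refine ⟨fun h t => h _ _ (by simp), fun h i j hij => ?_⟩
  obtain ⟨t, rfl, rfl⟩ : ∃ t : Fin m, t.castSucc.castSucc = i ∧ t.succ.succ = j :=
    ⟨⟨i, by omega⟩, Fin.ext rfl, Fin.ext (by simp [hij])⟩
  exact h t

theorem last_sub_one_eq_castSucc (m : ℕ) : Fin.last (m + 1) - 1 = (Fin.last m).castSucc :=
  Fin.ext (by simp [Fin.coe_sub_one])

-- `F` is a `Matrix` and the bound is `m + 2 - 1` (not `m + 1`) so that `simp` can rewrite the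
-- product of the main theorem, after `z := m + 2`, before normalizing the arithmetic.
theorem prod_ite_two_le_le {α M : Type*} [CommMonoid M] {m : ℕ} (F : Matrix α α M)
    (v : Fin (m + 2 + 1) → α) :
    ∏ s : Fin (m + 2 + 1),
        (if 2 ≤ (s : ℕ) ∧ (s : ℕ) ≤ m + 2 - 1 then F (v (s - 1)) (v s) else 1) =
      ∏ t : Fin m, F (v t.castSucc.castSucc.succ) (v t.castSucc.succ.succ) := by
  have hsub (t : Fin m) : (t.castSucc.succ.succ - 1 : Fin (m + 2 + 1)) = t.castSucc.castSucc.succ :=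
    Fin.ext (by simp [Fin.coe_sub_one])
  rw [Fin.prod_univ_succ, Fin.prod_univ_succ, Fin.prod_univ_castSucc]
  simp [hsub]

end Fin

theorem Real.sign_mul_abs (x : ℝ) : Real.sign x * |x| = x := by
  rcases lt_trichotomy x 0 with h | rfl | h
  · rw [Real.sign_of_neg h, abs_of_neg h, neg_one_mul, neg_neg]
  · simp
  · rw [Real.sign_of_pos h, abs_of_pos h, one_mul]

section TildeSign

variable {ι : Type*} [LinearOrder ι] {A : Matrix ι ι ℝ}

def tildeSign (A : Matrix ι ι ℝ) (u v : ι) : ℝ :=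
  if u < v then Real.sign (A u v) else 1

theorem tildeSign_mul_tildeSign_mul_abs (hsym : A.IsSymm) (hdiag : ∀ i, A i i = 0) (u v : ι) :
    tildeSign A v u * tildeSign A u v * |A u v| = A u v := by
  rcases lt_trichotomy u v with h | rfl | h
  · simp [tildeSign, h, h.not_gt, Real.sign_mul_abs]
  · simp [hdiag]
  · simp [tildeSign, h, h.not_gt, hsym.apply u v, Real.sign_mul_abs]

end TildeSign

section NonbacktrackingMatrix

variable {n : ℕ} {A : Matrix (Fin n) (Fin n) ℝ}

def edgeScale (A : Matrix (Fin n) (Fin n) ℝ) (e : EdgeIdx A) : ℝ :=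
  tildeSign A e.1.2 e.1.1 * √|A e.1.1 e.1.2|

theorem edgeScale_mul_tildeSign_mul_sqrt (hsym : A.IsSymm) (hdiag : ∀ i, A i i = 0)
    (e : EdgeIdx A) :
    edgeScale A e * (tildeSign A e.1.1 e.1.2 * √|A e.1.1 e.1.2|) = A e.1.1 e.1.2 := by
  have h := tildeSign_mul_tildeSign_mul_abs hsym hdiag e.1.1 e.1.2
  rw [← Real.mul_self_sqrt (abs_nonneg _)] at h
  rw [edgeScale]
  linear_combination h

theorem edgeScale_ne_zero (hsym : A.IsSymm) (hdiag : ∀ i, A i i = 0) (e : EdgeIdx A) :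
    edgeScale A e ≠ 0 :=
  left_ne_zero_of_mul (edgeScale_mul_tildeSign_mul_sqrt hsym hdiag e ▸ e.2)

theorem Bmat_apply_eq_ite (hsym : A.IsSymm) (hdiag : ∀ i, A i i = 0) (g h : EdgeIdx A) :
    Bmat A g h = if g.1.2 = h.1.1 ∧ h.1.2 ≠ g.1.1 then
      tildeSign A g.1.2 g.1.1 * tildeSign A h.1.1 h.1.2 * √|A g.1.1 g.1.2 * A h.1.1 h.1.2|
      else 0 := by
  obtain ⟨⟨u, v⟩, hg⟩ := g
  obtain ⟨⟨w, x⟩, hh⟩ := h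
  simp only [Bmat, tildeSign]
  by_cases hvw : v = w
  · subst hvw
    have huv : u ≠ v := fun h => hg (h ▸ hdiag u)
    have hvx : v ≠ x := fun h => hh (h ▸ hdiag v)
    rcases lt_or_gt_of_ne huv with h1 | h1 <;> rcases lt_or_gt_of_ne hvx with h2 | h2 <;>
      simp [h1, h2, h1.not_gt, h2.not_gt, hsym.apply u v, mul_comm]
  · simp [hvw]

def nbMatrix {ι R : Type*} [DecidableEq ι] [Zero R] (A : Matrix ι ι R) :
    Matrix (ι × ι) (ι × ι) R :=
  fun g h => if g.2 = h.1 ∧ h.2 ≠ g.1 then A h.1 h.2 else 0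

theorem nbMatrix_apply_of_ne {ι R : Type*} [DecidableEq ι] [Zero R] (A : Matrix ι ι R)
    {g h : ι × ι} (hgh : g.2 ≠ h.1) : nbMatrix A g h = 0 := by
  simp [nbMatrix, hgh]

theorem nbMatrix_walkEdges {ι R : Type*} [DecidableEq ι] [Zero R] (A : Matrix ι ι R) {k : ℕ}
    (v : Fin (k + 2) → ι) (t : Fin k) :
    nbMatrix A (walkEdges v t.castSucc) (walkEdges v t.succ) =
      if v t.castSucc.castSucc ≠ v t.succ.succ then A (v t.succ.castSucc) (v t.succ.succ)
      else 0 := by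
  simp [nbMatrix, walkEdges, ne_comm]

theorem semiconjBy_diagonal_edgeScale (hsym : A.IsSymm) (hdiag : ∀ i, A i i = 0) :
    SemiconjBy (diagonal (edgeScale A))
      ((nbMatrix A).submatrix (fun e : EdgeIdx A => e.1) (fun e => e.1)) (Bmat A) := by
  ext g h
  rw [diagonal_mul, mul_diagonal, submatrix_apply, Bmat_apply_eq_ite hsym hdiag]
  simp only [nbMatrix]
  split_ifs
  · have key := edgeScale_mul_tildeSign_mul_sqrt hsym hdiag h
    simp only [edgeScale] at key ⊢
    rw [abs_mul, Real.sqrt_mul (abs_nonneg _)]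
    linear_combination (-(tildeSign A g.1.2 g.1.1 * √|A g.1.1 g.1.2|)) * key
  · simp

theorem Bmat_pow_apply_mul_edgeScale (hsym : A.IsSymm) (hdiag : ∀ i, A i i = 0) (k : ℕ)
    (e f : EdgeIdx A) :
    (Bmat A ^ k) e f * edgeScale A f = edgeScale A e * (nbMatrix A ^ k) e.1 f.1 := by
  have hM : ∀ g h, h ∉ Set.range (fun e : EdgeIdx A => e.1) → nbMatrix A g h = 0 := by
    intro g h hh
    have hA : A h.1 h.2 = 0 := by
      by_contra hA
      exact hh ⟨⟨h, hA⟩, rfl⟩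
    simp [nbMatrix, hA]
  have h := congrFun (congrFun ((semiconjBy_diagonal_edgeScale hsym hdiag).pow_right k) e) f
  rw [submatrix_pow_of_apply_eq_zero (κ := EdgeIdx A) _ (fun _ _ => Subtype.ext) hM] at h
  simpa [diagonal_mul, mul_diagonal] using h.symm

theorem edgeScale_mul_nbMatrix_walk_prod_div_edgeScale (hsym : A.IsSymm) (hdiag : ∀ i, A i i = 0)
    {m : ℕ} (e f : EdgeIdx A) (v : Fin (m + 2 + 1) → Fin n) :
    edgeScale A e * (if walkEdges v 0 = e.1 ∧ walkEdges v (Fin.last (m + 1)) = f.1 then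
        ∏ t : Fin (m + 1), nbMatrix A (walkEdges v t.castSucc) (walkEdges v t.succ) else 0) /
      edgeScale A f =
    if (∀ t : Fin (m + 2), v t.castSucc ≠ v t.succ) ∧
        (∀ t : Fin (m + 1), v t.castSucc.castSucc ≠ v t.succ.succ) ∧
        v 0 = e.1.1 ∧ v 1 = e.1.2 ∧ v (Fin.last (m + 1)).castSucc = f.1.1 ∧
        v (Fin.last (m + 2)) = f.1.2 then
      tildeSign A (v 1) (v 0) * tildeSign A (v (Fin.last (m + 1)).castSucc) (v (Fin.last (m + 2))) *
        √|A (v 0) (v 1) * A (v (Fin.last (m + 1)).castSucc) (v (Fin.last (m + 2)))| *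
        ∏ t : Fin m, A (v t.castSucc.castSucc.succ) (v t.castSucc.succ.succ)
    else 0 := by
  by_cases hends : v 0 = e.1.1 ∧ v 1 = e.1.2 ∧ v (Fin.last (m + 1)).castSucc = f.1.1 ∧
      v (Fin.last (m + 2)) = f.1.2
  swap
  · rw [if_neg (by simpa [walkEdges, Prod.ext_iff, and_assoc] using hends),
      if_neg fun h => hends h.2.2, mul_zero, zero_div]
  obtain ⟨h0, h1, h2, h3⟩ := hends
  rw [if_pos (by simp [walkEdges, h0, h1, h2, h3]),
    Finset.prod_congr rfl fun t _ => nbMatrix_walkEdges A v t, Fintype.prod_ite_zero]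
  by_cases hnb : ∀ t : Fin (m + 1), v t.castSucc.castSucc ≠ v t.succ.succ
  swap
  · rw [if_neg hnb, if_neg fun h => hnb h.2.1, mul_zero, zero_div]
  have hfirst : A e.1.1 e.1.2 * ∏ t : Fin (m + 1), A (v t.succ.castSucc) (v t.succ.succ) =
      ∏ t : Fin (m + 2), A (v t.castSucc) (v t.succ) := by
    rw [Fin.prod_univ_succ (fun t : Fin (m + 2) => A (v t.castSucc) (v t.succ)),
      Fin.castSucc_zero, Fin.succ_zero_eq_one, h0, h1]
  rw [if_pos hnb]
  by_cases hadj : ∀ t : Fin (m + 2), v t.castSucc ≠ v t.succ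
  · have hlast : ∏ t : Fin (m + 1), A (v t.succ.castSucc) (v t.succ.succ) =
        (∏ t : Fin m, A (v t.castSucc.castSucc.succ) (v t.castSucc.succ.succ)) *
          A f.1.1 f.1.2 := by
      rw [Fin.prod_univ_castSucc]
      simp [h2, h3]
    have key := edgeScale_mul_tildeSign_mul_sqrt hsym hdiag f
    rw [if_pos ⟨hadj, hnb, h0, h1, h2, h3⟩, h0, h1, h2, h3, hlast,
      div_eq_iff (edgeScale_ne_zero hsym hdiag f)]
    simp only [edgeScale] at key ⊢
    rw [abs_mul, Real.sqrt_mul (abs_nonneg _)]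
    linear_combination (-(tildeSign A e.1.2 e.1.1 * √|A e.1.1 e.1.2| *
      ∏ t : Fin m, A (v t.castSucc.castSucc.succ) (v t.castSucc.succ.succ))) * key
  · -- a repeated vertex gives a zero factor `A_{uu}`, and not in the first edge since `A_e ≠ 0`
    simp only [not_forall, not_not] at hadj
    obtain ⟨t, ht⟩ := hadj
    have hzero : ∏ t : Fin (m + 2), A (v t.castSucc) (v t.succ) = 0 :=
      Finset.prod_eq_zero (Finset.mem_univ t) (by rw [ht, hdiag])
    rw [← hfirst] at hzero
    rw [(mul_eq_zero.mp hzero).resolve_left e.2, if_neg fun h => h.1 t ht, mul_zero, zero_div]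

end NonbacktrackingMatrix

/-- **Expansion of powers of the non-backtracking matrix** (Fact 4.6).
For `z ≥ 2` and oriented edges `e, f` of the graph of `A`,
`(B^{z-1})_{ef} = ∑_{W ∈ NBW_{ef}^z} σ̃_{e₁⁻¹}·σ̃_{e_z}·√|A_{e₁}A_{e_z}|·∏_{s=2}^{z-1} A_{e_s}`,
the sum running over non-backtracking walks `v 0, …, v z` in the complete graph `K_n`
with first directed edge `e` and last directed edge `f`. -/
theorem nonbacktracking_power_expansion (n : ℕ) (A : Matrix (Fin n) (Fin n) ℝ)
    (hsym : A.IsSymm) (hdiag : ∀ i, A i i = 0)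
    (z : ℕ) (hz : 2 ≤ z) (e f : EdgeIdx A) :
    (Bmat A ^ (z - 1)) e f =
      ∑ v : Fin (z + 1) → Fin n,
        if -- walk in the complete graph: consecutive vertices are distinct
           (∀ i j : Fin (z + 1), (j : ℕ) = (i : ℕ) + 1 → v i ≠ v j) ∧
           -- non-backtracking
           (∀ i j : Fin (z + 1), (j : ℕ) = (i : ℕ) + 2 → v i ≠ v j) ∧
           -- first directed edge is e, last directed edge is f
           v 0 = e.1.1 ∧ v 1 = e.1.2 ∧
           v (Fin.last z - 1) = f.1.1 ∧ v (Fin.last z) = f.1.2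
        then
          (if v 1 < v 0 then Real.sign (A (v 1) (v 0)) else 1) *
          (if v (Fin.last z - 1) < v (Fin.last z) then
              Real.sign (A (v (Fin.last z - 1)) (v (Fin.last z))) else 1) *
          Real.sqrt |A (v 0) (v 1) * A (v (Fin.last z - 1)) (v (Fin.last z))| *
          ∏ s : Fin (z + 1),
            (if 2 ≤ (s : ℕ) ∧ (s : ℕ) ≤ z - 1 then A (v (s - 1)) (v s) else 1)
        else 0 := by
  obtain ⟨m, rfl⟩ : ∃ m, z = m + 2 := ⟨z - 2, by omega⟩
  simp only [Fin.prod_ite_two_le_le]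
  simp only [Fin.forall_val_eq_add_one_imp_iff, Fin.forall_val_eq_add_two_imp_iff,
    Fin.last_sub_one_eq_castSucc]
  rw [show m + 2 - 1 = m + 1 from rfl, eq_div_of_mul_eq (edgeScale_ne_zero hsym hdiag f)
      (Bmat_pow_apply_mul_edgeScale hsym hdiag _ e f),
    pow_apply_eq_sum_walks _ (fun _ _ => nbMatrix_apply_of_ne A), Finset.mul_sum, Finset.sum_div]
  exact Finset.sum_congr rfl fun v _ =>
    edgeScale_mul_nbMatrix_walk_prod_div_edgeScale hsym hdiag e f v
end
end

section
/- Let k ≥ 3 be odd. There exist constants C, C' > 0 such that for all sufficiently large n the following holds. Let T be a random order-k tensor on [n] with independent entries such that T_α = 0 whenever the indices of α ∈ [n]^k are not all distinct, and otherwise E[T_α] = 0, ℙ[T_α ≠ 0] ≤ p, and ℙ[c₀ ≤ |T_α| ≤ 1 | T_α ≠ 0] = 1 for an absolute constant c₀ > 0. If C·n^{-k/2} ≤ p ≤ n^{-k/2}·(log n)^{10}, then with probability greater than 0.99, max_{x ∈ {±1}^n} Σ_{α ∈ [n]^k} T_α·x^α ≤ C'·√p·n^{3k/4}. -/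
open MeasureTheory ProbabilityTheory Finset

/-!
Fix a sign vector `x`. The form `∑ α, T_α x^α` is a sum of `n ^ k` independent, centred
entries bounded by `1`, each of variance at most `p`. Since `e^u ≤ 1 + u + u²` for `|u| ≤ 1`,
every entry has `E[e^{λ T_α x^α}] ≤ e^{λ² p}` for `0 ≤ λ ≤ 1`, and the Chernoff bound with
`m = n^{k/4}` and `λ = 1 / (√p m)` (which is `≤ 1` exactly when `p ≥ n^{-k/2}`) gives
`ℙ[form ≥ 2 √p m³] ≤ e^{-m²} = e^{-n^{k/2}}`. As `k ≥ 3`, `n^{k/2} ≥ 2n` overwhelms the `2^n`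
sign vectors in a union bound.
-/

section Bernstein

variable {Ω : Type*} [MeasurableSpace Ω] {μ : Measure Ω}

lemma integrable_exp_mul_of_ae_abs_le_one [IsFiniteMeasure μ] {Y : Ω → ℝ} (hY : Measurable Y)
    (hb : ∀ᵐ ω ∂μ, |Y ω| ≤ 1) (t : ℝ) : Integrable (fun ω => Real.exp (t * Y ω)) μ := by
  refine Integrable.of_bound (hY.const_mul t).exp.aestronglyMeasurable (Real.exp |t|) ?_
  filter_upwards [hb] with ω h
  rw [Real.norm_eq_abs, Real.abs_exp, Real.exp_le_exp]
  calc t * Y ω ≤ |t| * |Y ω| := by rw [← abs_mul]; exact le_abs_self _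
    _ ≤ |t| := mul_le_of_le_one_right (abs_nonneg t) h

lemma integrable_sq_of_ae_abs_le_one [IsFiniteMeasure μ] {Y : Ω → ℝ} (hY : Measurable Y)
    (hb : ∀ᵐ ω ∂μ, |Y ω| ≤ 1) : Integrable (fun ω => Y ω ^ 2) μ := by
  refine Integrable.of_bound (hY.pow_const 2).aestronglyMeasurable 1 ?_
  filter_upwards [hb] with ω h
  rw [Real.norm_eq_abs, abs_pow]
  exact pow_le_one₀ (abs_nonneg _) h

lemma integral_sq_le_measureReal_ne_zero [IsFiniteMeasure μ] {Y : Ω → ℝ} (hY : Measurable Y)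
    (hb : ∀ᵐ ω ∂μ, |Y ω| ≤ 1) : ∫ ω, Y ω ^ 2 ∂μ ≤ μ.real {ω | Y ω ≠ 0} := by
  have hs : MeasurableSet {ω | Y ω ≠ 0} := hY (measurableSet_singleton 0).compl
  rw [← integral_indicator_one hs]
  refine integral_mono_ae (integrable_sq_of_ae_abs_le_one hY hb)
    ((integrable_const 1).indicator hs) ?_
  filter_upwards [hb] with ω h
  by_cases h0 : Y ω = 0
  · simp [h0]
  · rw [Set.indicator_of_mem h0, Pi.one_apply, ← sq_abs]
    exact pow_le_one₀ (abs_nonneg _) h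

lemma mgf_le_exp_sq_mul_integral_sq [IsProbabilityMeasure μ] {Y : Ω → ℝ} (hY : Measurable Y)
    (hb : ∀ᵐ ω ∂μ, |Y ω| ≤ 1) (hmean : μ[Y] = 0) {t : ℝ} (ht : |t| ≤ 1) :
    mgf Y μ t ≤ Real.exp (t ^ 2 * ∫ ω, Y ω ^ 2 ∂μ) := by
  have hY1 : Integrable Y μ := Integrable.of_bound hY.aestronglyMeasurable 1 hb
  have hY2 := integrable_sq_of_ae_abs_le_one hY hb
  have hlin : Integrable (fun ω => 1 + t * Y ω) μ := (integrable_const 1).add (hY1.const_mul t)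
  have hquad : ∀ᵐ ω ∂μ, Real.exp (t * Y ω) ≤ 1 + t * Y ω + t ^ 2 * Y ω ^ 2 := by
    filter_upwards [hb] with ω h
    have htY : |t * Y ω| ≤ 1 := by rw [abs_mul]; exact mul_le_one₀ ht (abs_nonneg _) h
    have := (abs_le.1 (Real.abs_exp_sub_one_sub_id_le htY)).2
    linarith [mul_pow t (Y ω) 2]
  calc mgf Y μ t ≤ ∫ ω, (1 + t * Y ω + t ^ 2 * Y ω ^ 2) ∂μ :=
        integral_mono_ae (integrable_exp_mul_of_ae_abs_le_one hY hb t)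
          (hlin.add (hY2.const_mul _)) hquad
    _ = 1 + t ^ 2 * ∫ ω, Y ω ^ 2 ∂μ := by
        rw [integral_add hlin (hY2.const_mul _),
          integral_add (integrable_const 1) (hY1.const_mul t), integral_const_mul,
          integral_const_mul, hmean]
        simp
    _ ≤ Real.exp (t ^ 2 * ∫ ω, Y ω ^ 2 ∂μ) := by
        linarith [Real.add_one_le_exp (t ^ 2 * ∫ ω, Y ω ^ 2 ∂μ)]

lemma measureReal_sum_ge_le_of_iIndepFun [IsProbabilityMeasure μ] {ι : Type*} [Fintype ι]
    {Y : ι → Ω → ℝ} (hind : iIndepFun Y μ) (hY : ∀ i, Measurable (Y i))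
    (hb : ∀ i, ∀ᵐ ω ∂μ, |Y i ω| ≤ 1) (hmean : ∀ i, μ[Y i] = 0) {v : ℝ}
    (hvar : ∀ i, ∫ ω, Y i ω ^ 2 ∂μ ≤ v) (ε : ℝ) {t : ℝ} (ht₀ : 0 ≤ t) (ht₁ : t ≤ 1) :
    μ.real {ω | ε ≤ ∑ i, Y i ω} ≤ Real.exp (-t * ε + Fintype.card ι * (t ^ 2 * v)) := by
  have hint := hind.integrable_exp_mul_sum hY (s := univ)
    fun i _ => integrable_exp_mul_of_ae_abs_le_one (hY i) (hb i) t
  have hmgf : ∀ i, mgf (Y i) μ t ≤ Real.exp (t ^ 2 * v) := fun i =>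
    (mgf_le_exp_sq_mul_integral_sq (hY i) (hb i) (hmean i) (abs_le.2 ⟨by linarith, ht₁⟩)).trans
      (Real.exp_le_exp.2 (mul_le_mul_of_nonneg_left (hvar i) (sq_nonneg t)))
  calc μ.real {ω | ε ≤ ∑ i, Y i ω} ≤ Real.exp (-t * ε) * mgf (∑ i, Y i) μ t := by
        simpa only [Finset.sum_apply] using measure_ge_le_exp_mul_mgf ε ht₀ hint
    _ ≤ Real.exp (-t * ε) * ∏ _i : ι, Real.exp (t ^ 2 * v) := by
        rw [hind.mgf_sum hY]
        gcongr with i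
        · exact fun i _ => mgf_nonneg
        · exact hmgf i
    _ = Real.exp (-t * ε + Fintype.card ι * (t ^ 2 * v)) := by
        rw [prod_const, card_univ, ← Real.exp_nat_mul, ← Real.exp_add]

lemma measureReal_sum_mul_ge_le_exp_neg_sq [IsProbabilityMeasure μ] {ι : Type*} [Fintype ι]
    {X : ι → Ω → ℝ} (hind : iIndepFun X μ) (hX : ∀ i, Measurable (X i))
    (hb : ∀ i, ∀ᵐ ω ∂μ, |X i ω| ≤ 1) (hmean : ∀ i, μ[X i] = 0) {p : ℝ}
    (hp : ∀ i, μ.real {ω | X i ω ≠ 0} ≤ p) {c : ι → ℝ} (hc : ∀ i, |c i| ≤ 1) {m : ℝ}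
    (hm : 0 < m) (hcard : (Fintype.card ι : ℝ) = m ^ 4) (hpm : 1 ≤ p * m ^ 2) :
    μ.real {ω | 2 * √p * m ^ 3 ≤ ∑ i, X i ω * c i} ≤ Real.exp (-m ^ 2) := by
  have hp0 : 0 < p := pos_of_mul_pos_left (one_pos.trans_le hpm) (by positivity)
  set s := √p
  have hs : s ^ 2 = p := Real.sq_sqrt hp0.le
  have hs0 : 0 < s := Real.sqrt_pos.2 hp0
  have hsm : 1 ≤ s * m := (one_le_sq_iff₀ (by positivity)).1 (by rwa [mul_pow, hs])
  have hvar : ∀ i, ∫ ω, (X i ω * c i) ^ 2 ∂μ ≤ p := fun i => calc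
    ∫ ω, (X i ω * c i) ^ 2 ∂μ = c i ^ 2 * ∫ ω, X i ω ^ 2 ∂μ := by
      simp_rw [mul_pow, integral_mul_const, mul_comm]
    _ ≤ 1 * ∫ ω, X i ω ^ 2 ∂μ := by
      refine mul_le_mul_of_nonneg_right ?_ (integral_nonneg fun ω => sq_nonneg (X i ω))
      rw [← sq_abs]
      exact pow_le_one₀ (abs_nonneg _) (hc i)
    _ ≤ p := by rw [one_mul]; exact (integral_sq_le_measureReal_ne_zero (hX i) (hb i)).trans (hp i)
  refine (measureReal_sum_ge_le_of_iIndepFun (Y := fun i ω => X i ω * c i)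
    (hind.comp (fun i y => y * c i) fun i => measurable_id.mul_const _)
    (fun i => (hX i).mul_const _)
    (fun i => (hb i).mono fun ω h => by rw [abs_mul]; exact mul_le_one₀ h (abs_nonneg _) (hc i))
    (fun i => by simp only [integral_mul_const, hmean i, zero_mul]) hvar (2 * s * m ^ 3)
    (t := 1 / (s * m)) (by positivity) ((div_le_one (by positivity)).2 hsm)).trans_eq ?_
  rw [hcard, ← hs]
  congr 1
  field_simp
  ring

lemma one_sub_sum_measureReal_le_measureReal_forall [IsProbabilityMeasure μ] {ι : Type*}
    (s : Finset ι) (f : ι → Ω → ℝ) (ε : ℝ) :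
    1 - ∑ i ∈ s, μ.real {ω | ε ≤ f i ω} ≤ μ.real {ω | ∀ i ∈ s, f i ω ≤ ε} := by
  set G := {ω | ∀ i ∈ s, f i ω ≤ ε}
  have hbad : Gᶜ ⊆ ⋃ i ∈ s, {ω | ε ≤ f i ω} := by
    intro ω hω
    simp only [G, Set.mem_compl_iff, Set.mem_ofPred_eq, not_forall, not_le] at hω
    obtain ⟨i, hi, h⟩ := hω
    exact Set.mem_biUnion hi h.le
  have hcover := measureReal_union_le (μ := μ) G Gᶜ
  rw [Set.union_compl_self, probReal_univ] at hcover
  linarith [(measureReal_mono hbad (measure_ne_top μ _)).trans (measureReal_biUnion_finset_le s _)]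

end Bernstein

lemma two_pow_mul_exp_neg_rpow_lt {k n : ℕ} (hk : 3 ≤ k) (hn : 100 ≤ n) :
    (2 : ℝ) ^ n * Real.exp (-(n : ℝ) ^ ((k : ℝ) / 2)) < 0.01 := by
  have hn' : (100 : ℝ) ≤ n := by exact_mod_cast hn
  have hk' : (3 : ℝ) ≤ k := by exact_mod_cast hk
  have hsqrt : 2 ≤ √(n : ℝ) := Real.le_sqrt_of_sq_le (by linarith)
  have hgrowth : 2 * (n : ℝ) ≤ (n : ℝ) ^ ((k : ℝ) / 2) := calc
    2 * (n : ℝ) ≤ (n : ℝ) ^ ((1 : ℝ) + 1 / 2) := by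
      rw [Real.rpow_add (by linarith), Real.rpow_one, ← Real.sqrt_eq_rpow]; nlinarith
    _ ≤ (n : ℝ) ^ ((k : ℝ) / 2) := Real.rpow_le_rpow_of_exponent_le (by linarith) (by linarith)
  have htwo : (2 : ℝ) ^ n ≤ Real.exp n := by
    rw [← Real.exp_one_pow]
    exact pow_le_pow_left₀ zero_le_two (by linarith [Real.add_one_le_exp 1]) n
  calc (2 : ℝ) ^ n * Real.exp (-(n : ℝ) ^ ((k : ℝ) / 2)) ≤ Real.exp n * Real.exp (-(2 * n)) := by
        gcongr
    _ = (Real.exp n)⁻¹ := by rw [← Real.exp_add, ← Real.exp_neg]; ring_nf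
    _ < 0.01 := by
        rw [inv_lt_comm₀ (Real.exp_pos _) (by norm_num)]
        linarith [Real.add_one_le_exp (n : ℝ)]

lemma measureReal_tensor_form_ge_le_exp_neg {Ω : Type*} [MeasurableSpace Ω] {μ : Measure Ω}
    [IsProbabilityMeasure μ] {k n : ℕ} (hn : 0 < n) {X : (Fin k → Fin n) → Ω → ℝ}
    (hind : iIndepFun X μ) (hX : ∀ α, Measurable (X α)) (hb : ∀ α, ∀ᵐ ω ∂μ, |X α ω| ≤ 1)
    (hmean : ∀ α, μ[X α] = 0) {p : ℝ} (hp : ∀ α, μ.real {ω | X α ω ≠ 0} ≤ p)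
    (hpn : (n : ℝ) ^ (-(k : ℝ) / 2) ≤ p) {x : Fin n → ℝ} (hx : ∀ i, |x i| ≤ 1) :
    μ.real {ω | 2 * √p * (n : ℝ) ^ (3 * (k : ℝ) / 4) ≤ ∑ α, X α ω * ∏ i, x (α i)} ≤
      Real.exp (-(n : ℝ) ^ ((k : ℝ) / 2)) := by
  have hn0 : (0 : ℝ) < n := by exact_mod_cast hn
  set m := (n : ℝ) ^ ((k : ℝ) / 4)
  have hm : 0 < m := Real.rpow_pos_of_pos hn0 _
  have hpow : ∀ j : ℕ, m ^ j = (n : ℝ) ^ ((j : ℝ) * k / 4) := fun j => by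
    rw [← Real.rpow_natCast, ← Real.rpow_mul hn0.le]
    ring_nf
  have h2 : m ^ 2 = (n : ℝ) ^ ((k : ℝ) / 2) := by rw [hpow]; ring_nf
  have h3 : m ^ 3 = (n : ℝ) ^ (3 * (k : ℝ) / 4) := by rw [hpow]; norm_num
  have h4 : (Fintype.card (Fin k → Fin n) : ℝ) = m ^ 4 := by
    rw [hpow, Fintype.card_fun, Fintype.card_fin, Fintype.card_fin, Nat.cast_pow,
      ← Real.rpow_natCast]
    ring_nf
  have hpm : 1 ≤ p * m ^ 2 := by
    rw [neg_div, Real.rpow_neg hn0.le, ← h2] at hpn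
    simpa [hm.ne'] using mul_le_mul_of_nonneg_right hpn (sq_nonneg m)
  rw [← h2, ← h3]
  refine measureReal_sum_mul_ge_le_exp_neg_sq hind hX hb hmean hp (fun α => ?_) hm h4 hpm
  rw [abs_prod]
  exact prod_le_one (fun _ _ => abs_nonneg _) fun i _ => hx _

theorem sharp_bounds_random_polynomials_general (k : ℕ) (hk : 3 ≤ k)
    (c₀ : ℝ) :
    ∃ C C' : ℝ, 0 < C ∧ 0 < C' ∧
    ∃ N : ℕ, ∀ n : ℕ, N ≤ n →
    ∀ p : ℝ, C * (n : ℝ) ^ (-(k : ℝ) / 2) ≤ p →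
      p ≤ (n : ℝ) ^ (-(k : ℝ) / 2) * Real.log n ^ (10 : ℕ) →
    ∀ (Ω : Type) (_ : MeasurableSpace Ω) (μ : Measure Ω), IsProbabilityMeasure μ →
    ∀ T : Ω → (Fin k → Fin n) → ℝ,
      Measurable T →
      -- entries with non-distinct indices vanish
      (∀ ω (α : Fin k → Fin n), ¬ Function.Injective α → T ω α = 0) →
      -- remaining entries have mean zero
      (∀ α : Fin k → Fin n, Function.Injective α → ∫ ω, T ω α ∂μ = 0) →
      -- each entry is nonzero with probability at most p
      (∀ α : Fin k → Fin n, μ {ω | T ω α ≠ 0} ≤ ENNReal.ofReal p) →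
      -- conditioned on being nonzero, `c₀ ≤ |T_α| ≤ 1` almost surely
      (∀ α : Fin k → Fin n, ∀ᵐ ω ∂μ, T ω α ≠ 0 → c₀ ≤ |T ω α| ∧ |T ω α| ≤ 1) →
      -- the entries are mutually independent
      iIndepFun
        (fun (α : Fin k → Fin n) (ω : Ω) => T ω α) μ →
      ENNReal.ofReal 0.99 <
        μ {ω | ∀ x : Fin n → ℝ, (∀ i, x i = 1 ∨ x i = -1) →
            (∑ α : Fin k → Fin n, T ω α * ∏ i, x (α i)) ≤
              C' * Real.sqrt p * (n : ℝ) ^ (3 * (k : ℝ) / 4)} := by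
  refine ⟨1, 2, one_pos, two_pos, 100,
    fun n hn p hpn _ Ω _ μ _ T hT hzero hmean hnz hbdd hind => ?_⟩
  rw [one_mul] at hpn
  have hp0 : 0 ≤ p := (Real.rpow_nonneg n.cast_nonneg _).trans hpn
  have hb : ∀ α, ∀ᵐ ω ∂μ, |T ω α| ≤ 1 := fun α =>
    (hbdd α).mono fun ω h => by by_cases h0 : T ω α = 0 <;> simp_all
  have hcentred : ∀ α, ∫ ω, T ω α ∂μ = 0 := fun α => by
    by_cases hα : α.Injective
    · exact hmean α hα
    · simp [hzero _ _ hα]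
  set signs := Fintype.piFinset fun _ : Fin n => ({1, -1} : Finset ℝ)
  have htail : ∀ x ∈ signs, μ.real {ω | 2 * √p * (n : ℝ) ^ (3 * (k : ℝ) / 4) ≤
      ∑ α, T ω α * ∏ i, x (α i)} ≤ Real.exp (-(n : ℝ) ^ ((k : ℝ) / 2)) := fun x hx =>
    measureReal_tensor_form_ge_le_exp_neg (by omega) hind (fun α => (measurable_pi_apply α).comp hT)
      hb hcentred (fun α => ENNReal.toReal_le_of_le_ofReal hp0 (hnz α)) hpn
      fun i => by rcases mem_insert.1 (Fintype.mem_piFinset.1 hx i) with h | h <;> simp_all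
  rw [ENNReal.ofReal_lt_iff_lt_toReal (by norm_num) (measure_ne_top _ _)]
  calc (0.99 : ℝ) < 1 - 2 ^ n * Real.exp (-(n : ℝ) ^ ((k : ℝ) / 2)) := by
        linarith [two_pow_mul_exp_neg_rpow_lt hk hn]
    _ = 1 - ∑ _x ∈ signs, Real.exp (-(n : ℝ) ^ ((k : ℝ) / 2)) := by
        simp [signs, card_pair (by norm_num : (1 : ℝ) ≠ -1)]
    _ ≤ 1 - ∑ x ∈ signs, μ.real {ω | 2 * √p * (n : ℝ) ^ (3 * (k : ℝ) / 4) ≤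
          ∑ α, T ω α * ∏ i, x (α i)} := by gcongr with x hx; exact htail x hx
    _ ≤ μ.real {ω | ∀ x ∈ signs, ∑ α, T ω α * ∏ i, x (α i) ≤
          2 * √p * (n : ℝ) ^ (3 * (k : ℝ) / 4)} :=
        one_sub_sum_measureReal_le_measureReal_forall _ _ _
    _ ≤ _ := by
        refine measureReal_mono fun ω h x hx => h x (Fintype.mem_piFinset.2 fun i => ?_)
        rcases hx i with h | h <;> simp [h]

/-- **Sharp bounds for random polynomials** (Theorem 5.2).
For odd `k ≥ 3` and a random order-`k` tensor `T` with independent entries, mean zero,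
`ℙ[T_α ≠ 0] ≤ p` and `c₀ ≤ |T_α| ≤ 1` conditioned on `T_α ≠ 0` (entries with
non-distinct indices vanish): if `C·n^{-k/2} ≤ p ≤ n^{-k/2}·(log n)^{10}`, then with
probability greater than `0.99`,
`max_{x ∈ {±1}^n} ∑_α T_α x^α ≤ C'·√p·n^{3k/4}`. -/
theorem sharp_bounds_random_polynomials (k : ℕ) (hk : 3 ≤ k) (hkodd : Odd k)
    (c₀ : ℝ) (hc₀ : 0 < c₀) :
    ∃ C C' : ℝ, 0 < C ∧ 0 < C' ∧
    ∃ N : ℕ, ∀ n : ℕ, N ≤ n →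
    ∀ p : ℝ, C * (n : ℝ) ^ (-(k : ℝ) / 2) ≤ p →
      p ≤ (n : ℝ) ^ (-(k : ℝ) / 2) * Real.log n ^ (10 : ℕ) →
    ∀ (Ω : Type) (_ : MeasurableSpace Ω) (μ : Measure Ω), IsProbabilityMeasure μ →
    ∀ T : Ω → (Fin k → Fin n) → ℝ,
      Measurable T →
      -- entries with non-distinct indices vanish
      (∀ ω (α : Fin k → Fin n), ¬ Function.Injective α → T ω α = 0) →
      -- remaining entries have mean zero
      (∀ α : Fin k → Fin n, Function.Injective α → ∫ ω, T ω α ∂μ = 0) →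
      -- each entry is nonzero with probability at most p
      (∀ α : Fin k → Fin n, μ {ω | T ω α ≠ 0} ≤ ENNReal.ofReal p) →
      -- conditioned on being nonzero, `c₀ ≤ |T_α| ≤ 1` almost surely
      (∀ α : Fin k → Fin n, ∀ᵐ ω ∂μ, T ω α ≠ 0 → c₀ ≤ |T ω α| ∧ |T ω α| ≤ 1) →
      -- the entries are mutually independent
      iIndepFun
        (fun (α : Fin k → Fin n) (ω : Ω) => T ω α) μ →
      ENNReal.ofReal 0.99 <
        μ {ω | ∀ x : Fin n → ℝ, (∀ i, x i = 1 ∨ x i = -1) →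
            (∑ α : Fin k → Fin n, T ω α * ∏ i, x (α i)) ≤
              C' * Real.sqrt p * (n : ℝ) ^ (3 * (k : ℝ) / 4)} :=
  sharp_bounds_random_polynomials_general k hk c₀
end
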